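/- Fix integers N ≥ 2 and d ≥ 1, and equip ℝ^d with the max-norm ‖x‖ = max_{1≤s≤d} |x^{(s)}|. Let u = (u_1, …, u_N) ∈ (ℝ^d)^N, and let L, r be real numbers with 0 < L ≤ r. If max_{i≠j} ‖u_i − u_j‖ ≥ 3·N·r, then there exists a nonempty proper subset J ⊊ {1, …, N} such that for all i ∈ J and j ∉ J and all points p, q ∈ ℝ^d with ‖p − u_i‖ ≤ L and ‖q − u_j‖ ≤ L, one has ‖p − q‖ > r. In particular, the two sets ⋃_{i∈J} closedBall(u_i, L) and ⋃_{j∉J} closedBall(u_j, L) are at distance greater than r from each other. -/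

import Mathlib

/-- Canonical factorization of a weakly interactive cube: if an `N`-particle configuration
`u ∈ (ℝ^d)^N` (with `ℝ^d` carrying the max-norm) has projection diameter
`max_{i ≠ j} ‖u i - u j‖ ≥ 3 N r`, and `0 < L ≤ r`, then the index set `{1, …, N}` splits
into a nonempty proper subset `J` and its complement such that any two points within
max-norm distance `L` of a `J`-particle and of a non-`J`-particle, respectively, are at
distance `> r` from each other. -/
theorem stmt_3 (N d : ℕ) (hN : 2 ≤ N) (hd : 1 ≤ d)
    (u : Fin N → (Fin d → ℝ)) (L r : ℝ) (hL : 0 < L) (hLr : L ≤ r)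
    (hdiam : ∃ i j : Fin N, i ≠ j ∧ 3 * (N : ℝ) * r ≤ ‖u i - u j‖) :
    ∃ J : Finset (Fin N), J.Nonempty ∧ J ≠ Finset.univ ∧
      ∀ i ∈ J, ∀ j ∉ J, ∀ p q : Fin d → ℝ,
        ‖p - u i‖ ≤ L → ‖q - u j‖ ≤ L → r < ‖p - q‖ := by
  obtain ⟨i0, j0, hij, hd3⟩ := hdiam
  have hr : 0 < r := lt_of_lt_of_le hL hLr
  have h3r : 0 < 3 * r := by linarith
  have hN0 : (0:ℝ) < N := by positivity
  have hNr : 0 < 3 * (N:ℝ) * r := by positivity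
  haveI : Nonempty (Fin N) := ⟨⟨0, by omega⟩⟩
  -- choose a coordinate realizing the max-norm bound
  have hs : ∃ s : Fin d, 3 * (N : ℝ) * r ≤ |u i0 s - u j0 s| := by
    by_contra h
    push_neg at h
    have : ‖u i0 - u j0‖ < 3 * (N:ℝ) * r := by
      refine (pi_norm_lt_iff hNr).mpr fun s => ?_
      simpa [Real.norm_eq_abs] using h s
    linarith
  obtain ⟨s, hs⟩ := hs
  set v : Fin N → ℝ := fun i => u i s with hv
  obtain ⟨a, b, hab⟩ : ∃ a b : Fin N, 3 * (N:ℝ) * r ≤ v b - v a := by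
    rcases le_abs.mp hs with h1 | h1
    · exact ⟨j0, i0, by simp only [hv]; linarith⟩
    · exact ⟨i0, j0, by simp only [hv]; linarith⟩
  set m : ℝ := Finset.univ.inf' Finset.univ_nonempty v with hm
  obtain ⟨im, _, him⟩ := Finset.exists_mem_eq_inf' Finset.univ_nonempty v
  have hmle : ∀ i, m ≤ v i := fun i => Finset.inf'_le v (Finset.mem_univ i)
  set k : Fin N → ℤ := fun i => ⌊(v i - m) / (3 * r)⌋ with hk
  have hk0 : k im = 0 := by
    simp only [hk]
    rw [← him]
    simp [← hm]
  have hkb : (N:ℤ) ≤ k b := by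
    rw [Int.le_floor]
    rw [le_div_iff₀ h3r]
    have := hmle a
    push_cast
    linarith
  have hknn : ∀ i, 0 ≤ k i := fun i =>
    Int.floor_nonneg.mpr (div_nonneg (sub_nonneg.mpr (hmle i)) (le_of_lt h3r))
  -- pigeonhole: some g ∈ [0, N] is not a value of k
  obtain ⟨g, hgI, hgim⟩ : ∃ g ∈ Finset.Icc (0:ℤ) (N:ℤ), g ∉ Finset.univ.image k := by
    by_contra h
    push_neg at h
    have hsub : Finset.Icc (0:ℤ) (N:ℤ) ⊆ Finset.univ.image k := fun g hg => h g hg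
    have h1 := Finset.card_le_card hsub
    have h2 : (Finset.univ.image k).card ≤ N := le_trans Finset.card_image_le (by simp)
    rw [Int.card_Icc] at h1
    simp at h1
    omega
  obtain ⟨hg0, hgN⟩ := Finset.mem_Icc.mp hgI
  have hgne : ∀ i, k i ≠ g := fun i hi => hgim (Finset.mem_image.mpr ⟨i, Finset.mem_univ i, hi⟩)
  have hg1 : 1 ≤ g := by
    rcases lt_or_ge 0 g with h | h
    · omega
    · exact absurd (by omega : k im = g) (hgne im)
  refine ⟨Finset.univ.filter (fun i => k i < g), ⟨im, ?_⟩, ?_, ?_⟩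
  · simp only [Finset.mem_filter, Finset.mem_univ, true_and, hk0]
    omega
  · intro h
    have hb : b ∈ Finset.univ.filter (fun i => k i < g) := by
      rw [h]; exact Finset.mem_univ b
    simp only [Finset.mem_filter, Finset.mem_univ, true_and] at hb
    omega
  · intro i hi j hj p q hp hq
    simp only [Finset.mem_filter, Finset.mem_univ, true_and] at hi hj
    push_neg at hj
    have hkj : g + 1 ≤ k j := by
      have := hgne j
      omega
    have hki : k i + 1 ≤ g := by omega
    -- v i - m < 3r * (k i + 1) ≤ 3r * g
    have hvi : v i - m < 3 * r * ((k i : ℝ) + 1) := by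
      have := Int.lt_floor_add_one ((v i - m) / (3 * r))
      rw [div_lt_iff₀ h3r] at this
      linarith
    have hvj : 3 * r * (k j : ℝ) ≤ v j - m := by
      have := Int.floor_le ((v j - m) / (3 * r))
      rw [le_div_iff₀ h3r] at this
      linarith
    have hcast1 : ((k i : ℝ) + 1) ≤ (g : ℝ) := by exact_mod_cast hki
    have hcast2 : ((g : ℝ) + 1) ≤ (k j : ℝ) := by exact_mod_cast hkj
    have hgap : 3 * r < v j - v i := by nlinarith
    -- coordinate bounds
    have hps : |p s - v i| ≤ L := by
      have h1 : |(p - u i) s| ≤ ‖p - u i‖ := by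
        simpa [Real.norm_eq_abs] using norm_le_pi_norm (p - u i) s
      simp only [Pi.sub_apply] at h1
      exact le_trans h1 hp
    have hqs : |q s - v j| ≤ L := by
      have h1 : |(q - u j) s| ≤ ‖q - u j‖ := by
        simpa [Real.norm_eq_abs] using norm_le_pi_norm (q - u j) s
      simp only [Pi.sub_apply] at h1
      exact le_trans h1 hq
    have h2 : |(p - q) s| ≤ ‖p - q‖ := by
      simpa [Real.norm_eq_abs] using norm_le_pi_norm (p - q) s
    simp only [Pi.sub_apply] at h2
    have h3 : q s - p s ≤ |p s - q s| := by
      rw [abs_sub_comm]; exact le_abs_self _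
    rw [abs_le] at hps hqs
    have : r < q s - p s := by linarith [hps.1, hps.2, hqs.1, hqs.2]
    linarith
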